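/- If G is a 2-connected graph that is not a cycle and e is a compliant edge of G, then G - e is 2-connected. -/

import Mathlib

open SimpleGraph

universe u

/-- A flat (suspended) path: a path of length at least 2 all of whose internal
vertices have degree 2 in `G`. -/
def IsFlatPath {V : Type u} (G : SimpleGraph V) {x y : V} (p : G.Walk x y) : Prop :=
  p.IsPath ∧ 2 ≤ p.length ∧
    ∀ v ∈ p.support, v ≠ x → v ≠ y → (G.neighborSet v).ncard = 2

/-- An edge `xy` is compliant if `x` and `y` are also joined by a flat path. -/
def Compliant {V : Type u} (G : SimpleGraph V) (x y : V) : Prop :=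
  G.Adj x y ∧ ∃ p : G.Walk x y, IsFlatPath G p

/-- A graph is 2-connected if it has at least 3 vertices and remains connected
after deleting any single vertex. -/
def TwoConnected {V : Type u} (G : SimpleGraph V) : Prop :=
  3 ≤ Nat.card V ∧ ∀ v : V, ((⊤ : G.Subgraph).deleteVerts {v}).coe.Connected

/-- A (finite) graph is a cycle iff it is connected and 2-regular. -/
def IsCycleGraph {V : Type u} (G : SimpleGraph V) : Prop :=
  G.Connected ∧ ∀ v : V, (G.neighborSet v).ncard = 2

/-- Data exhibiting a subgraph of `G` which is a subdivision of `H`: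
branch vertices are given by an injection `f`, and each edge of `H` is
replaced by a path in `G`, these paths being internally disjoint and their
internal vertices avoiding the branch vertices. -/
structure SubdivisionIn {V : Type u} {W : Type*} (G : SimpleGraph V) (H : SimpleGraph W) where
  f : W → V
  inj : Function.Injective f
  path : ∀ ⦃u v : W⦄, H.Adj u v → G.Walk (f u) (f v)
  isPath : ∀ ⦃u v : W⦄ (h : H.Adj u v), (path h).IsPath
  internal_not_branch : ∀ ⦃u v : W⦄ (h : H.Adj u v), ∀ w ∈ (path h).support,
      (∃ z, w = f z) → w = f u ∨ w = f v
  internal_disjoint : ∀ ⦃u v u' v' : W⦄ (h : H.Adj u v) (h' : H.Adj u' v'),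
      s(u, v) ≠ s(u', v') → ∀ w ∈ (path h).support, w ∈ (path h').support →
        w = f u ∨ w = f v

/-- The vertices of the subdivided subgraph. -/
def SubdivisionIn.verts {V : Type u} {W : Type*} {G : SimpleGraph V} {H : SimpleGraph W}
    (D : SubdivisionIn G H) : Set V :=
  {w | ∃ (u v : W) (h : H.Adj u v), w ∈ (D.path h).support}

/-- `G` contains a subdivision of `H` as a subgraph. -/
def ContainsSubdivision {V : Type u} {W : Type*} (G : SimpleGraph V) (H : SimpleGraph W) : Prop :=
  Nonempty (SubdivisionIn G H)

/-- A graph is outerplanar iff it contains no subdivision of `K₄` or `K_{2,3}`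
as a subgraph. -/
def Outerplanar {V : Type u} (G : SimpleGraph V) : Prop :=
  ¬ ContainsSubdivision G (⊤ : SimpleGraph (Fin 4)) ∧
  ¬ ContainsSubdivision G (completeBipartiteGraph (Fin 2) (Fin 3))

/-! For `v ≠ x, y`, the graph `G - xy - v` is `G - v` with the edge `xy` removed, so it stays
connected as soon as `x` and `y` are joined in `G - xy - v`. If `v` is off the flat path `p`,
`p` itself joins them. If `v` is internal to `p`, we need an `x`–`y` route avoiding the interior
of `p`. As `G` is not a cycle, some vertex `z` lies off `p` (otherwise `x` and `y` would have
degree 2 as well). The internal vertices of `p` have no neighbours off `p`, so a walk from `z` to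
`x` in `G - y` first meets `p` at `x`, a walk from `z` to `y` in `G - x` first meets `p` at `y`,
and together they form the route. -/

namespace SimpleGraph

variable {V : Type u} {G : SimpleGraph V}

theorem Walk.toSubgraph_le_top_deleteVerts_singleton_iff {a b : V} (p : G.Walk a b) (v : V) :
    p.toSubgraph ≤ (⊤ : G.Subgraph).deleteVerts {v} ↔ v ∉ p.support := by
  have avoids {u : V} (h : v ∉ p.support) (hu : u ∈ p.support) : u ∉ ({v} : Set V) :=
    fun huv => h (huv ▸ hu)
  refine ⟨fun h hv => (h.1 (p.mem_verts_toSubgraph.mpr hv)).2 rfl, fun h => ⟨?_, ?_⟩⟩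
  · exact fun u hu => ⟨trivial, avoids h (p.mem_verts_toSubgraph.mp hu)⟩
  · intro c d hcd
    rw [Subgraph.deleteVerts_adj]
    exact ⟨trivial, avoids h (Walk.mem_support_of_adj_toSubgraph hcd), trivial,
      avoids h (Walk.mem_support_of_adj_toSubgraph hcd.symm), hcd.adj_sub⟩

theorem connected_coe_top_deleteVerts_singleton_iff (v : V) :
    ((⊤ : G.Subgraph).deleteVerts {v}).coe.Connected ↔
      (∃ a, a ≠ v) ∧ ∀ a b, a ≠ v → b ≠ v → ∃ p : G.Walk a b, v ∉ p.support := by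
  rw [← Subgraph.connected_iff', Subgraph.connected_iff_forall_exists_walk_subgraph]
  simp only [Walk.toSubgraph_le_top_deleteVerts_singleton_iff, Subgraph.deleteVerts_verts,
    Subgraph.verts_top, Set.mem_sdiff, Set.mem_univ, Set.mem_singleton_iff, true_and]
  exact and_congr (by simp [Set.Nonempty]) ⟨fun h a b => h, fun h _ _ => h _ _⟩

theorem exists_walk_deleteEdges_of_adj {x y v : V}
    (hxy : v ≠ x → v ≠ y → ∃ q : (G.deleteEdges {s(x, y)}).Walk x y, v ∉ q.support)
    {a b : V} (hab : G.Adj a b) (ha : a ≠ v) (hb : b ≠ v) :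
    ∃ q : (G.deleteEdges {s(x, y)}).Walk a b, v ∉ q.support := by
  by_cases he : s(a, b) = s(x, y)
  · rcases Sym2.eq_iff.mp he with ⟨rfl, rfl⟩ | ⟨rfl, rfl⟩
    · exact hxy ha.symm hb.symm
    · obtain ⟨q, hq⟩ := hxy hb.symm ha.symm
      exact ⟨q.reverse, by simpa using hq⟩
  · refine ⟨(deleteEdges_adj.mpr ⟨hab, he⟩).toWalk, ?_⟩
    simp [ha.symm, hb.symm]

theorem Walk.exists_walk_deleteEdges {x y v : V}
    (hxy : v ≠ x → v ≠ y → ∃ q : (G.deleteEdges {s(x, y)}).Walk x y, v ∉ q.support)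
    {a b : V} (p : G.Walk a b) (hp : v ∉ p.support) :
    ∃ q : (G.deleteEdges {s(x, y)}).Walk a b, v ∉ q.support := by
  induction p with
  | nil => exact ⟨.nil, hp⟩
  | cons hac p ih =>
    rw [Walk.support_cons, List.mem_cons, not_or] at hp
    obtain ⟨q₁, hq₁⟩ := exists_walk_deleteEdges_of_adj hxy hac (Ne.symm hp.1)
      (fun h => hp.2 (h ▸ p.start_mem_support))
    obtain ⟨q₂, hq₂⟩ := ih hp.2
    exact ⟨q₁.append q₂, by simp [Walk.mem_support_append_iff, hq₁, hq₂]⟩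

end SimpleGraph

theorem TwoConnected.connected {V : Type u} {G : SimpleGraph V} (h2 : TwoConnected G) :
    G.Connected := by
  have : Finite V := Nat.finite_of_card_ne_zero (by have := h2.1; omega)
  have : Nonempty V := Nat.card_pos_iff.mp (by have := h2.1; omega) |>.1
  refine ⟨fun a b => ?_⟩
  by_cases hab : a = b
  · exact hab ▸ .rfl
  obtain ⟨v, hva, hvb⟩ :=
    ENat.exists_ne_ne_of_three_le (by simpa [ENat.card_eq_coe_natCard] using h2.1) a b
  obtain ⟨p, -⟩ :=
    ((connected_coe_top_deleteVerts_singleton_iff v).mp (h2.2 v)).2 a b hva.symm hvb.symm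
  exact p.reachable

namespace IsFlatPath

open SimpleGraph.Walk

variable {V : Type u} {G : SimpleGraph V} {x y : V} {p : G.Walk x y}

theorem reverse (hp : IsFlatPath G p) : IsFlatPath G p.reverse := by
  obtain ⟨hpath, hlen, hdeg⟩ := hp
  exact ⟨hpath.reverse, by simpa using hlen,
    fun v hv hvy hvx => hdeg v (by simpa using hv) hvx hvy⟩

theorem getVert_ne_end (hp : IsFlatPath G p) {i : ℕ} (hi : i < p.length) : p.getVert i ≠ y := by
  intro h
  have : i = p.length := hp.1.getVert_injOn (Set.mem_ofPred.mpr hi.le)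
    (Set.mem_ofPred.mpr le_rfl) (by rwa [getVert_length])
  omega

theorem ne (hp : IsFlatPath G p) : x ≠ y :=
  p.getVert_zero ▸ hp.getVert_ne_end (by have := hp.2.1; omega)

theorem snd_ne (hp : IsFlatPath G p) : p.snd ≠ y :=
  hp.getVert_ne_end (by have := hp.2.1; omega)

theorem neighborSet_eq {c : V} (hp : IsFlatPath G p) (hc : c ∈ p.support) (hcx : c ≠ x)
    (hcy : c ≠ y) : G.neighborSet c = p.toSubgraph.neighborSet c := by
  obtain ⟨i, rfl, hi⟩ := mem_support_iff_exists_getVert.mp hc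
  have hi0 : i ≠ 0 := by rintro rfl; exact hcx p.getVert_zero
  have hil : i < p.length := lt_of_le_of_ne hi (by rintro rfl; exact hcy p.getVert_length)
  have hdeg := hp.2.2 _ hc hcx hcy
  refine (Set.eq_of_subset_of_ncard_le (fun u hu => hu.adj_sub) ?_
    (Set.finite_of_ncard_ne_zero (by omega))).symm
  rw [hdeg, hp.1.ncard_neighborSet_toSubgraph_internal_eq_two hi0 hil]

theorem mem_support_of_adj {c u : V} (hp : IsFlatPath G p) (hc : c ∈ p.support) (hcx : c ≠ x)
    (hcy : c ≠ y) (hcu : G.Adj c u) : u ∈ p.support := by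
  have : u ∈ p.toSubgraph.neighborSet c := hp.neighborSet_eq hc hcx hcy ▸ hcu
  exact mem_support_of_adj_toSubgraph (Subgraph.adj_symm _ this)

theorem neighborSet_start (hp : IsFlatPath G p) (hxy : G.Adj x y) (hall : ∀ u, u ∈ p.support) :
    G.neighborSet x = {y, p.snd} := by
  refine Set.Subset.antisymm (fun u hxu => ?_) ?_
  · by_cases huy : u = y
    · exact .inl huy
    have hu : x ∈ p.toSubgraph.neighborSet u :=
      hp.neighborSet_eq (hall u) hxu.ne' huy ▸ (hxu.symm : G.Adj u x)
    exact .inr (hp.1.snd_of_toSubgraph_adj (Subgraph.adj_symm _ hu)).symm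
  · rintro u (rfl | rfl)
    · exact hxy
    · exact p.adj_snd (not_nil_of_ne hp.ne)

theorem exists_notMem_support (hp : IsFlatPath G p) (hconn : G.Connected)
    (hnc : ¬ IsCycleGraph G) (hxy : G.Adj x y) : ∃ z, z ∉ p.support := by
  by_contra! hall
  have hdeg_start {a b : V} (q : G.Walk a b) (hq : IsFlatPath G q) (hab : G.Adj a b)
      (hq_all : ∀ u, u ∈ q.support) : (G.neighborSet a).ncard = 2 := by
    rw [hq.neighborSet_start hab hq_all, Set.ncard_pair hq.snd_ne.symm]
  refine hnc ⟨hconn, fun v => ?_⟩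
  by_cases hvx : v = x
  · exact hvx ▸ hdeg_start p hp hxy hall
  by_cases hvy : v = y
  · exact hvy ▸ hdeg_start p.reverse hp.reverse hxy.symm (by simpa using hall)
  exact hp.2.2 v (hall v) hvx hvy

theorem sym2_notMem_edges (hp : IsFlatPath G p) : s(x, y) ∉ p.edges := fun h =>
  hp.snd_ne (hp.1.snd_of_toSubgraph_adj (adj_toSubgraph_iff_mem_edges.mpr h))

theorem exists_walk_meeting_only_start (hp : IsFlatPath G p) {z : V} (hz : z ∉ p.support)
    (w : G.Walk z x) (hy : y ∉ w.support) :
    ∃ w' : G.Walk z x, ∀ u ∈ w'.support, u ∈ p.support → u = x := by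
  classical
  obtain ⟨c, hcp, hcw, hfirst⟩ :=
    w.exists_mem_support_forall_mem_support_imp_eq p.support.toFinset ⟨x, by simp⟩
  rw [List.mem_toFinset] at hcp
  set w' := w.takeUntil c hcw
  suffices c = x by
    subst this
    exact ⟨w', fun u hu hup => hfirst u (List.mem_toFinset.mpr hup) hu⟩
  by_contra hcx
  have hcy : c ≠ y := fun h => hy (h ▸ hcw)
  have hnil : ¬ w'.Nil := not_nil_of_ne fun h => hz (h ▸ hcp)
  have hadj : G.Adj w'.penultimate c := adj_penultimate hnil
  exact hadj.ne (hfirst _ (List.mem_toFinset.mpr (hp.mem_support_of_adj hcp hcx hcy hadj.symm))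
    (getVert_mem_support _ _))

theorem exists_walk_deleteEdges_avoiding (hp : IsFlatPath G p) (h2 : TwoConnected G)
    (hnc : ¬ IsCycleGraph G) (hxy : G.Adj x y) :
    ∃ q : (G.deleteEdges {s(x, y)}).Walk x y,
      ∀ u ∈ q.support, u ∈ p.support → u = x ∨ u = y := by
  obtain ⟨z, hz⟩ := hp.exists_notMem_support h2.connected hnc hxy
  have hzx : z ≠ x := fun h => hz (h ▸ p.start_mem_support)
  have hzy : z ≠ y := fun h => hz (h ▸ p.end_mem_support)
  have avoid (v : V) := ((connected_coe_top_deleteVerts_singleton_iff v).mp (h2.2 v)).2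
  obtain ⟨wx, hwx⟩ := avoid y z x hzy hp.ne
  obtain ⟨wy, hwy⟩ := avoid x z y hzx hp.ne.symm
  obtain ⟨wx, hwx⟩ := hp.exists_walk_meeting_only_start hz wx hwx
  obtain ⟨wy, hwy⟩ := hp.reverse.exists_walk_meeting_only_start (by simpa using hz) wy hwy
  have hx : x ∉ wy.support := fun h => hp.ne (hwy x h (by simp))
  have hy : y ∉ wx.support := fun h => hp.ne (hwx y h p.end_mem_support).symm
  have hxy_edge : s(x, y) ∉ (wx.reverse.append wy).edges := by
    rw [edges_append, edges_reverse, List.mem_append, List.mem_reverse]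
    rintro (h | h)
    · exact hy (wx.snd_mem_support_of_mem_edges h)
    · exact hx (wy.fst_mem_support_of_mem_edges h)
  refine ⟨(wx.reverse.append wy).toDeleteEdge _ hxy_edge, fun u hu hup => ?_⟩
  rw [support_transfer, mem_support_append_iff, support_reverse, List.mem_reverse] at hu
  exact hu.imp (hwx u · hup) (hwy u · (by simpa using hup))

end IsFlatPath

theorem stmt2_general {V : Type u} (G : SimpleGraph V)
    (h2 : TwoConnected G) (hnc : ¬ IsCycleGraph G)
    (x y : V) (hc : Compliant G x y) :
    TwoConnected (G.deleteEdges {s(x, y)}) := by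
  obtain ⟨hxy, p, hp : IsFlatPath G p⟩ := hc
  obtain ⟨q, hq⟩ := hp.exists_walk_deleteEdges_avoiding h2 hnc hxy
  refine ⟨h2.1, fun v => ?_⟩
  obtain ⟨hne, hwalk⟩ := (connected_coe_top_deleteVerts_singleton_iff v).mp (h2.2 v)
  refine (connected_coe_top_deleteVerts_singleton_iff v).mpr ⟨hne, fun a b ha hb => ?_⟩
  obtain ⟨w, hw⟩ := hwalk a b ha hb
  refine w.exists_walk_deleteEdges (fun hvx hvy => ?_) hw
  by_cases hvp : v ∈ p.support
  · exact ⟨q, fun hvq => (hq v hvq hvp).elim hvx hvy⟩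
  · exact ⟨p.toDeleteEdge _ hp.sym2_notMem_edges, by simpa using hvp⟩

/-- If `G` is 2-connected, not a cycle, and `e = xy` is a compliant edge,
then `G - e` is 2-connected. -/
theorem stmt2 {V : Type u} [Finite V] (G : SimpleGraph V)
    (h2 : TwoConnected G) (hnc : ¬ IsCycleGraph G)
    (x y : V) (hc : Compliant G x y) :
    TwoConnected (G.deleteEdges {s(x, y)}) :=
  stmt2_general G h2 hnc x y hc
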